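/- arXiv:1401.5124 — 8 statements merged into one kernel-verified Lean document; each statement's English description precedes it below -/
import Mathlib

section
/- Let P ≪ Q be probability distributions on the same measurable space and 0 ≤ α ≤ 1. Then (1/α) · D(αP + (1−α)Q ‖ Q) → 0 as α → 0, where D denotes relative entropy (KL divergence). -/
/-!
Write `p = dP/dQ`. The mixture `Pₐ = aP + (1-a)Q` has density `1 + a(p - 1)` with respect to `Q`,
and since it has mass one, `D(Pₐ‖Q) = ∫ φ(1 + a(p - 1)) dQ` with `φ(u) = u log u - u + 1 ≥ 0`.
As `φ` is convex with `φ(1) = φ'(1) = 0`, the quotient `φ(1 + as)/a` is nondecreasing in `a` and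
tends to `0` as `a → 0`. If some `D(P_b‖Q)` is finite, dominated convergence with dominating
function `φ(1 + b(p - 1))/b` gives the claim; otherwise every `D(Pₐ‖Q)` is infinite, and
`relEnt`, being a Bochner integral, takes the value `0` on all of them.
-/

open MeasureTheory Filter Set Topology InformationTheory
open scoped ENNReal

/-- Relative entropy (KL divergence) in nats: `D(P‖Q) = ∫ log (dP/dQ) dP`. -/
noncomputable def relEnt {α : Type*} [MeasurableSpace α] (P Q : Measure α) : ℝ :=
  ∫ x, Real.log ((P.rnDeriv Q) x).toReal ∂P

section ConvexQuotient

variable {g : ℝ → ℝ}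

theorem ConvexOn.map_one_add_mul_div_le (hg : ConvexOn ℝ (Ici 0) g) (hg1 : g 1 = 0)
    {a b t : ℝ} (ha : 0 < a) (hab : a ≤ b) (ht : 0 ≤ 1 + b * t) :
    g (1 + a * t) / a ≤ g (1 + b * t) / b := by
  have hb : 0 < b := ha.trans_le hab
  have hconv := hg.2 (mem_Ici.2 ht) (mem_Ici.2 zero_le_one) (div_nonneg ha.le hb.le)
    (sub_nonneg.2 ((div_le_one hb).2 hab)) (add_sub_cancel _ _)
  have hcomb : (a / b) • (1 + b * t) + (1 - a / b) • (1 : ℝ) = 1 + a * t := by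
    simp only [smul_eq_mul]; field_simp; ring
  rw [hcomb, hg1, smul_zero, add_zero, smul_eq_mul] at hconv
  calc g (1 + a * t) / a ≤ a / b * g (1 + b * t) / a := by gcongr
    _ = g (1 + b * t) / b := by field_simp

theorem HasDerivAt.tendsto_map_one_add_mul_div (hg : HasDerivAt g 0 1) (hg1 : g 1 = 0) (t : ℝ) :
    Tendsto (fun a ↦ g (1 + a * t) / a) (𝓝[≠] 0) (𝓝 0) := by
  have hcomp : HasDerivAt (fun a ↦ g (1 + a * t)) 0 0 := by
    simpa [Function.comp_def] using
      hg.comp_of_eq (0 : ℝ) (((hasDerivAt_id 0).mul_const t).const_add 1) (by simp)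
  simpa [hg1, div_eq_inv_mul] using hasDerivAt_iff_tendsto_slope_zero.1 hcomp

theorem tendsto_inv_mul_toReal_lintegral_of_convexOn {α : Type*} [MeasurableSpace α]
    {Q : Measure α} (hg_meas : Measurable g) (hg : ConvexOn ℝ (Ici 0) g) (hg' : HasDerivAt g 0 1)
    (hg1 : g 1 = 0) {t : α → ℝ} (ht_meas : Measurable t) (ht : ∀ x, -1 ≤ t x) :
    Tendsto (fun a ↦ a⁻¹ * (∫⁻ x, ENNReal.ofReal (g (1 + a * t x)) ∂Q).toReal)
      (𝓝[Ioc 0 1] 0) (𝓝 0) := by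
  set F : ℝ → α → ℝ≥0∞ := fun a x ↦ ENNReal.ofReal (g (1 + a * t x) / a)
  have hF_meas : ∀ a, Measurable (F a) := fun a ↦ by fun_prop
  have hF_eq : ∀ a > 0,
      a⁻¹ * (∫⁻ x, ENNReal.ofReal (g (1 + a * t x)) ∂Q).toReal = (∫⁻ x, F a x ∂Q).toReal := by
    intro a ha
    simp_rw [F, div_eq_inv_mul, ENNReal.ofReal_mul (inv_nonneg.2 ha.le)]
    rw [lintegral_const_mul _ (by fun_prop), ENNReal.toReal_mul,
      ENNReal.toReal_ofReal (by positivity)]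
  have hF_mono : ∀ a b, 0 < a → a ≤ b → b ≤ 1 → ∀ x, F a x ≤ F b x := fun a b ha hab hb x ↦
    ENNReal.ofReal_le_ofReal <| hg.map_one_add_mul_div_le hg1 ha hab (by nlinarith [ht x])
  have hF_lim : ∀ x, Tendsto (fun a ↦ F a x) (𝓝[Ioc 0 1] 0) (𝓝 0) := fun x ↦ by
    have hle : 𝓝[Ioc (0 : ℝ) 1] 0 ≤ 𝓝[≠] 0 := nhdsWithin_mono 0 fun a ha ↦ ha.1.ne'
    simpa using ENNReal.tendsto_ofReal <| (hg'.tendsto_map_one_add_mul_div hg1 (t x)).mono_left hle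
  refine Tendsto.congr' (eventually_nhdsWithin_of_forall fun a ha ↦ (hF_eq a ha.1).symm) ?_
  by_cases hfin : ∃ b ∈ Ioc (0 : ℝ) 1, ∫⁻ x, F b x ∂Q ≠ ∞
  · obtain ⟨b, hb, hb_fin⟩ := hfin
    have hdom : Tendsto (fun a ↦ ∫⁻ x, F a x ∂Q) (𝓝[Ioc 0 1] 0) (𝓝 0) := by
      simpa using tendsto_lintegral_filter_of_dominated_convergence (F b)
        (Eventually.of_forall hF_meas)
        (by
          filter_upwards [self_mem_nhdsWithin,
            (eventually_lt_nhds hb.1).filter_mono nhdsWithin_le_nhds] with a ha hab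
          exact ae_of_all _ (hF_mono a b ha.1 hab.le hb.2))
        hb_fin (ae_of_all _ hF_lim)
    simpa [Function.comp_def] using (ENNReal.tendsto_toReal ENNReal.zero_ne_top).comp hdom
  · push Not at hfin
    refine tendsto_const_nhds.congr' (eventually_nhdsWithin_of_forall fun a ha ↦ ?_)
    simp [hfin a ha]

end ConvexQuotient

section Mixture

variable {α : Type*} [MeasurableSpace α] (P Q : Measure α) [IsFiniteMeasure P] [IsFiniteMeasure Q]
  {a : ℝ}

theorem MeasureTheory.Measure.rnDeriv_smul_add_smul_self {c d : ℝ≥0∞}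
    (hc : c ≠ ∞) (hd : d ≠ ∞) :
    (c • P + d • Q).rnDeriv Q =ᵐ[Q] fun x ↦ c * P.rnDeriv Q x + d := by
  have := P.smul_finite hc
  have := Q.smul_finite hd
  filter_upwards [Measure.rnDeriv_add' (c • P) (d • Q) Q, P.rnDeriv_smul_left_of_ne_top Q hc,
    Q.rnDeriv_smul_left_of_ne_top Q hd, Measure.rnDeriv_self Q] with x hadd hP hQ hself
  simp [hadd, hP, hQ, hself]

theorem toReal_rnDeriv_mixture (ha0 : 0 ≤ a) (ha1 : a ≤ 1) :
    (fun x ↦ ((ENNReal.ofReal a • P + ENNReal.ofReal (1 - a) • Q).rnDeriv Q x).toReal)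
      =ᵐ[Q] fun x ↦ 1 + a * ((P.rnDeriv Q x).toReal - 1) := by
  filter_upwards [P.rnDeriv_smul_add_smul_self Q ENNReal.ofReal_ne_top ENNReal.ofReal_ne_top,
    P.rnDeriv_lt_top Q] with x hx hlt
  rw [hx, ENNReal.toReal_add (ENNReal.mul_ne_top ENNReal.ofReal_ne_top hlt.ne)
    ENNReal.ofReal_ne_top, ENNReal.toReal_mul, ENNReal.toReal_ofReal ha0,
    ENNReal.toReal_ofReal (sub_nonneg.2 ha1)]
  ring

theorem klDiv_mixture (hPQ : P ≪ Q) (ha0 : 0 ≤ a) (ha1 : a ≤ 1) :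
    klDiv (ENNReal.ofReal a • P + ENNReal.ofReal (1 - a) • Q) Q
      = ∫⁻ x, ENNReal.ofReal (klFun (1 + a * ((P.rnDeriv Q x).toReal - 1))) ∂Q := by
  have := P.smul_finite (ENNReal.ofReal_ne_top (r := a))
  have := Q.smul_finite (ENNReal.ofReal_ne_top (r := 1 - a))
  rw [klDiv_eq_lintegral_klFun_of_ac ((hPQ.smul_left _).add_left (.smul_left .rfl _))]
  refine lintegral_congr_ae ?_
  filter_upwards [toReal_rnDeriv_mixture P Q ha0 ha1] with x hx
  rw [hx]

end Mixture

theorem isProbabilityMeasure_mixture {α : Type*} [MeasurableSpace α] (P Q : Measure α)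
    [IsProbabilityMeasure P] [IsProbabilityMeasure Q] {a : ℝ} (ha0 : 0 ≤ a) (ha1 : a ≤ 1) :
    IsProbabilityMeasure (ENNReal.ofReal a • P + ENNReal.ofReal (1 - a) • Q) := by
  constructor
  simp [← ENNReal.ofReal_add ha0 (sub_nonneg.2 ha1)]

theorem relEnt_eq_toReal_klDiv {α : Type*} [MeasurableSpace α] {μ ν : Measure α}
    [IsFiniteMeasure μ] [IsFiniteMeasure ν] (h : μ ≪ ν) (h_eq : μ univ = ν univ) :
    relEnt μ ν = (klDiv μ ν).toReal :=
  (toReal_klDiv_of_measure_eq h h_eq).symm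

/-- For probability measures `P ≪ Q`, `(1/α) D(αP + (1−α)Q ‖ Q) → 0` as `α → 0` in `(0,1]`. -/
theorem stmt_0 {α : Type*} [MeasurableSpace α] (P Q : Measure α)
    [IsProbabilityMeasure P] [IsProbabilityMeasure Q] (hPQ : P ≪ Q) :
    Filter.Tendsto
      (fun a : ℝ => (1 / a) * relEnt (ENNReal.ofReal a • P + ENNReal.ofReal (1 - a) • Q) Q)
      (nhdsWithin 0 (Set.Ioc 0 1)) (nhds 0) := by
  have hlim := tendsto_inv_mul_toReal_lintegral_of_convexOn (Q := Q) measurable_klFun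
    convexOn_klFun (by simpa using hasDerivAt_klFun one_ne_zero) klFun_one
    (t := fun x ↦ (P.rnDeriv Q x).toReal - 1) (by fun_prop) (fun x ↦ by simp)
  refine hlim.congr' (eventually_nhdsWithin_of_forall fun a ha ↦ ?_)
  have := isProbabilityMeasure_mixture P Q ha.1.le ha.2
  dsimp only
  rw [one_div, relEnt_eq_toReal_klDiv ((hPQ.smul_left _).add_left (.smul_left .rfl _))
    (by simp), klDiv_mixture P Q hPQ ha.1.le ha.2]
end

section
/- Suppose W_1, W_2, … are uncorrelated random variables and (c_n) is a strictly positive sequence increasing to +∞ such that the series ∑_{i=1}^∞ Var(W_i / c_i) converges. Then (1/c_n)(∑_{i=1}^n W_i − E[∑_{i=1}^n W_i]) → 0 in L². -/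
open MeasureTheory ProbabilityTheory Filter

/-! The centred partial sum `Sₙ - E Sₙ` has second moment `Var Sₙ`, which by uncorrelatedness is
`∑_{i<n} Var Wᵢ`. It remains to see that `(∑_{i<n} aᵢ) / bₙ → 0` when `aᵢ ≥ 0`, `bₙ ↑ ∞` and
`∑ aᵢ / bᵢ < ∞` (Kronecker): writing the quotient as `∑ᵢ 1_{i<n} aᵢ / bₙ`, each term tends to `0`
and is dominated by the summable `aᵢ / bᵢ`, so Tannery's theorem applies. -/

lemma tendsto_sum_range_div_of_summable_div {a b : ℕ → ℝ} (ha : ∀ i, 0 ≤ a i)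
    (hb : ∀ n, 0 < b n) (hb_mono : Monotone b) (hb_top : Tendsto b atTop atTop)
    (hs : Summable fun i => a i / b i) :
    Tendsto (fun n => (∑ i ∈ Finset.range n, a i) / b n) atTop (nhds 0) := by
  set f : ℕ → ℕ → ℝ := fun n i => if i < n then a i / b n else 0
  have hf_tsum n : ∑' i, f n i = (∑ i ∈ Finset.range n, a i) / b n := by
    rw [tsum_eq_sum (s := Finset.range n) fun i hi => if_neg (by simpa using hi),
      Finset.sum_div]
    exact Finset.sum_congr rfl fun i hi => if_pos (Finset.mem_range.1 hi)
  have hf_lim i : Tendsto (f · i) atTop (nhds 0) := by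
    have hdiv : Tendsto (fun n => a i / b n) atTop (nhds 0) :=
      hb_top.const_div_atTop (a i)
    refine hdiv.congr' ?_
    filter_upwards [eventually_gt_atTop i] with n hn
    exact (if_pos hn).symm
  have hf_bound n i : ‖f n i‖ ≤ a i / b i := by
    by_cases hin : i < n
    · simp only [f, if_pos hin, Real.norm_eq_abs, abs_of_nonneg (div_nonneg (ha i) (hb n).le)]
      exact div_le_div_of_nonneg_left (ha i) (hb i) (hb_mono hin.le)
    · simpa [f, if_neg hin] using div_nonneg (ha i) (hb i).le
  simpa [hf_tsum] using
    tendsto_tsum_of_dominated_convergence hs hf_lim (Eventually.of_forall hf_bound)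

lemma variance_fun_sum_of_pairwise_covariance_eq_zero {Ω ι : Type*} [MeasurableSpace Ω]
    {μ : Measure Ω} [IsFiniteMeasure μ] {X : ι → Ω → ℝ} {s : Finset ι}
    (hX : ∀ i ∈ s, MemLp (X i) 2 μ) (hcov : (s : Set ι).Pairwise fun i j => cov[X i, X j; μ] = 0) :
    Var[fun ω => ∑ i ∈ s, X i ω; μ] = ∑ i ∈ s, Var[X i; μ] := by
  rw [variance_fun_sum' hX]
  refine Finset.sum_congr rfl fun i hi => ?_
  rw [Finset.sum_eq_single_of_mem i hi fun j hj hji => hcov hi hj hji.symm,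
    covariance_self (hX i hi).aemeasurable]

/-- Law of large numbers for uncorrelated random variables: if the `W i` are uncorrelated with
finite variances, `(c n)` is strictly positive, increasing to `+∞`, and
`∑ Var(W i / c i) < ∞`, then `(1/c n)(∑_{i<n} W i − E[∑_{i<n} W i]) → 0` in `L²`. -/
theorem stmt_2 {Ω : Type*} [MeasurableSpace Ω] (μ : Measure Ω) [IsProbabilityMeasure μ]
    (W : ℕ → Ω → ℝ) (hL2 : ∀ i, MemLp (W i) 2 μ)
    (huncorr : ∀ i j, i ≠ j →
      ∫ ω, (W i ω - ∫ ω', W i ω' ∂μ) * (W j ω - ∫ ω', W j ω' ∂μ) ∂μ = 0)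
    (c : ℕ → ℝ) (hcpos : ∀ n, 0 < c n) (hcmono : Monotone c)
    (hctop : Tendsto c atTop atTop)
    (hsum : Summable fun i => variance (W i) μ / c i ^ 2) :
    Tendsto
      (fun n => ∫ ω,
        ((1 / c n) * ((∑ i ∈ Finset.range n, W i ω) - ∫ ω', ∑ i ∈ Finset.range n, W i ω' ∂μ)) ^ 2 ∂μ)
      atTop (nhds 0) := by
  have hsecond_moment n : ∫ ω,
      ((1 / c n) * ((∑ i ∈ Finset.range n, W i ω) - ∫ ω', ∑ i ∈ Finset.range n, W i ω' ∂μ)) ^ 2 ∂μ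
        = (∑ i ∈ Finset.range n, Var[W i; μ]) / c n ^ 2 := by
    have hSn : MemLp (fun ω => ∑ i ∈ Finset.range n, W i ω) 2 μ :=
      memLp_finsetSum _ fun i _ => hL2 i
    simp_rw [mul_pow, integral_const_mul]
    rw [← variance_eq_integral hSn.aemeasurable, variance_fun_sum_of_pairwise_covariance_eq_zero
      (fun i _ => hL2 i) fun i _ j _ hij => huncorr i j hij]
    ring
  simp_rw [hsecond_moment]
  exact tendsto_sum_range_div_of_summable_div (fun i => variance_nonneg _ _)
    (fun n => pow_pos (hcpos n) 2) (fun i j hij => pow_le_pow_left₀ (hcpos i).le (hcmono hij) 2)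
    (by simpa [sq] using hctop.atTop_mul_atTop₀ hctop) hsum
end

section
/- Fix b ≥ 0. There exists q ≥ 0 such that for all real z ≥ −1/(2b) and all integers n ≥ 1: Q(√n · z) − Q(√n · z · (1 + b z)) ≤ q/√n, where Q is the standard Gaussian complementary cdf. -/
open MeasureTheory ProbabilityTheory

/-- The standard Gaussian complementary cdf `Q(t) = P[Z > t]`. -/
noncomputable def gaussQ (t : ℝ) : ℝ := ((gaussianReal 0 1) (Set.Ioi t)).toReal

open Set Real

/-!
Write `a = √n z`. Then `Q(a) - Q(a (1 + b z))` is the Gaussian mass between `a` and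
`a (1 + b z)`. The hypothesis on `z` gives `1 + b z ≥ 1/2`, so every point `x` of that interval
has `|x| ≥ |a| / 2` and the density there is at most `φ(a / 2)`. The interval has length
`b z² √n = b a² / √n`, and `a² φ(a / 2) ≤ 4` uniformly in `a`, so `q = 4 b` works.
-/

lemma gaussQ_eq_integral (t : ℝ) : gaussQ t = ∫ x in Ioi t, gaussianPDFReal 0 1 x := by
  rw [gaussQ, gaussianReal_apply_eq_integral _ one_ne_zero, ENNReal.toReal_ofReal
    (setIntegral_nonneg measurableSet_Ioi fun x _ => gaussianPDFReal_nonneg 0 1 x)]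

lemma gaussQ_sub_gaussQ (a c : ℝ) :
    gaussQ a - gaussQ c = ∫ x in a..c, gaussianPDFReal 0 1 x := by
  rw [gaussQ_eq_integral, gaussQ_eq_integral, intervalIntegral.integral_Ioi_sub_Ioi'
    (integrable_gaussianPDFReal 0 1).integrableOn (integrable_gaussianPDFReal 0 1).integrableOn]

lemma gaussianPDFReal_le_of_sq_sub_le {μ : ℝ} {v : NNReal} {x s : ℝ}
    (h : (s - μ) ^ 2 ≤ (x - μ) ^ 2) : gaussianPDFReal μ v x ≤ gaussianPDFReal μ v s := by
  rw [gaussianPDFReal, gaussianPDFReal]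
  gcongr

lemma sq_mul_gaussianPDFReal_half_le (x : ℝ) : x ^ 2 * gaussianPDFReal 0 1 (x / 2) ≤ 4 := by
  have two_le_sqrt : 2 ≤ √(2 * π) := le_sqrt_of_sq_le (by nlinarith [pi_gt_three])
  have sq_le_exp : x ^ 2 / 8 ≤ exp (x ^ 2 / 8) := by linarith [add_one_le_exp (x ^ 2 / 8)]
  have hφ : gaussianPDFReal 0 1 (x / 2) = (√(2 * π))⁻¹ * (exp (x ^ 2 / 8))⁻¹ := by
    simp only [gaussianPDFReal, NNReal.coe_one, mul_one, sub_zero, ← exp_neg]; ring_nf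
  calc x ^ 2 * gaussianPDFReal 0 1 (x / 2) = 8 * (x ^ 2 / 8 / exp (x ^ 2 / 8)) / √(2 * π) := by
        rw [hφ]; field_simp
    _ ≤ 8 * 1 / 2 := by
        gcongr
        exact div_le_one_of_le₀ sq_le_exp (exp_pos _).le
    _ = 4 := by norm_num

lemma sq_half_le_sq_of_mem_uIcc {a r x : ℝ} (hr : 1 / 2 ≤ r) (hx : x ∈ uIcc a (a * r)) :
    (a / 2) ^ 2 ≤ x ^ 2 := by
  rcases le_total 0 a with ha | ha
  · have : a / 2 ≤ a * r := by nlinarith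
    have : a / 2 ≤ x := le_trans (le_min (by linarith) this) hx.1
    nlinarith
  · have : a * r ≤ a / 2 := by nlinarith
    have : x ≤ a / 2 := le_trans hx.2 (max_le (by linarith) this)
    nlinarith

lemma gaussQ_sub_gaussQ_mul_le {a r : ℝ} (hr : 1 / 2 ≤ r) :
    gaussQ a - gaussQ (a * r) ≤ gaussianPDFReal 0 1 (a / 2) * |a * r - a| := by
  rw [gaussQ_sub_gaussQ]
  refine (Real.le_norm_self _).trans (intervalIntegral.norm_integral_le_of_norm_le_const fun x hx => ?_)
  rw [norm_of_nonneg (gaussianPDFReal_nonneg 0 1 x)]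
  exact gaussianPDFReal_le_of_sq_sub_le
    (by simpa using sq_half_le_sq_of_mem_uIcc hr (uIoc_subset_uIcc hx))

lemma one_half_le_one_add_mul {b z : ℝ} (hb : 0 ≤ b) (hz : -(1 / (2 * b)) ≤ z) :
    1 / 2 ≤ 1 + b * z := by
  rcases hb.eq_or_lt with rfl | hb
  · norm_num
  · have : -(1 / 2) ≤ b * z :=
      calc -(1 / 2) = b * -(1 / (2 * b)) := by field_simp
        _ ≤ b * z := by gcongr
    linarith

/-- Fix `b ≥ 0`. There is `q ≥ 0` such that for all `z ≥ −1/(2b)` and integers `n ≥ 1`,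
`Q(√n z) − Q(√n z (1 + b z)) ≤ q / √n`. -/
theorem stmt_9 (b : ℝ) (hb : 0 ≤ b) :
    ∃ q : ℝ, 0 ≤ q ∧ ∀ (z : ℝ) (n : ℕ), 1 ≤ n → -(1 / (2 * b)) ≤ z →
      gaussQ (Real.sqrt n * z) - gaussQ (Real.sqrt n * z * (1 + b * z)) ≤ q / Real.sqrt n := by
  refine ⟨4 * b, by positivity, fun z n hn hz => ?_⟩
  have hn : 0 < √(n : ℝ) := sqrt_pos.2 (by exact_mod_cast hn)
  set a := √(n : ℝ) * z
  have width : |a * (1 + b * z) - a| = b * a ^ 2 / √(n : ℝ) := by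
    rw [show a * (1 + b * z) - a = b * a ^ 2 / √(n : ℝ) by field_simp; ring,
      abs_of_nonneg (by positivity)]
  calc gaussQ a - gaussQ (a * (1 + b * z))
      ≤ gaussianPDFReal 0 1 (a / 2) * |a * (1 + b * z) - a| :=
        gaussQ_sub_gaussQ_mul_le (one_half_le_one_add_mul hb hz)
    _ = b * (a ^ 2 * gaussianPDFReal 0 1 (a / 2)) / √(n : ℝ) := by rw [width]; ring
    _ ≤ b * 4 / √(n : ℝ) := by gcongr; exact sq_mul_gaussianPDFReal_half_le a
    _ = 4 * b / √(n : ℝ) := by ring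
end

section
/- Reverse Pinsker inequality: for probability distributions P and Q on a finite set B with Q(b) > 0 for all b ∈ B, D(P ‖ Q) ≤ (log e / min_{b∈B} Q(b)) · |P − Q|², where |P − Q| is the Euclidean norm of the difference of the probability vectors. -/
/-!
Since `log x ≤ x - 1`, each term of the divergence satisfies
`P log (P/Q) ≤ P (P/Q - 1) = (P - Q)²/Q + (P - Q)`; summing, the linear terms cancel because
`∑ P = ∑ Q`, so `D(P‖Q)` is at most the χ²-divergence `∑ (P - Q)²/Q`, and bounding every `Q b`
from below by `min Q` gives the claim.
-/

open Real Finset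

lemma mul_log_div_le_sq_sub_div_add_sub {p q : ℝ} (hp : 0 ≤ p) (hq : 0 < q) :
    p * log (p / q) ≤ (p - q) ^ 2 / q + (p - q) := by
  have hlog : p * log (p / q) ≤ p * (p / q - 1) := by
    rcases hp.eq_or_lt with rfl | hp
    · simp
    · exact mul_le_mul_of_nonneg_left (log_le_sub_one_of_pos (div_pos hp hq)) hp.le
  calc p * log (p / q) ≤ p * (p / q - 1) := hlog
    _ = (p - q) ^ 2 / q + (p - q) := by field_simp; ring

lemma sum_mul_log_div_le_sum_sq_sub_div {ι : Type*} (s : Finset ι) {P Q : ι → ℝ}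
    (hP : ∀ b ∈ s, 0 ≤ P b) (hQ : ∀ b ∈ s, 0 < Q b) (hPQ : ∑ b ∈ s, P b = ∑ b ∈ s, Q b) :
    ∑ b ∈ s, P b * log (P b / Q b) ≤ ∑ b ∈ s, (P b - Q b) ^ 2 / Q b :=
  calc ∑ b ∈ s, P b * log (P b / Q b)
      ≤ ∑ b ∈ s, ((P b - Q b) ^ 2 / Q b + (P b - Q b)) :=
        sum_le_sum fun b hb => mul_log_div_le_sq_sub_div_add_sub (hP b hb) (hQ b hb)
    _ = ∑ b ∈ s, (P b - Q b) ^ 2 / Q b := by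
        rw [sum_add_distrib, sum_sub_distrib, hPQ, sub_self, add_zero]

lemma sum_div_le_one_div_mul_sum {ι : Type*} (s : Finset ι) {f Q : ι → ℝ} {m : ℝ}
    (hf : ∀ b ∈ s, 0 ≤ f b) (hm : 0 < m) (hmQ : ∀ b ∈ s, m ≤ Q b) :
    ∑ b ∈ s, f b / Q b ≤ (1 / m) * ∑ b ∈ s, f b := by
  rw [mul_sum]
  refine sum_le_sum fun b hb => ?_
  rw [one_div_mul_eq_div]
  exact div_le_div_of_nonneg_left (hf b hb) hm (hmQ b hb)

/-- Reverse Pinsker inequality on a finite alphabet (in nats, so `log e = 1`):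
`D(P‖Q) ≤ (1 / min_b Q(b)) · |P − Q|²` where `|·|` is the Euclidean norm. -/
theorem stmt_11 {B : Type*} [Fintype B] [Nonempty B] (P Q : B → ℝ)
    (hP0 : ∀ b, 0 ≤ P b) (hP1 : ∑ b, P b = 1)
    (hQ0 : ∀ b, 0 < Q b) (hQ1 : ∑ b, Q b = 1) :
    ∑ b, P b * Real.log (P b / Q b) ≤ (1 / ⨅ b, Q b) * ∑ b, (P b - Q b) ^ 2 := by
  obtain ⟨b₀, hb₀⟩ := exists_eq_ciInf_of_finite (f := Q)
  have hmin_pos : 0 < ⨅ b, Q b := hb₀ ▸ hQ0 b₀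
  have hmin_le : ∀ b ∈ univ, (⨅ b, Q b) ≤ Q b := fun b _ =>
    ciInf_le (Set.finite_range Q).bddBelow b
  calc ∑ b, P b * log (P b / Q b)
      ≤ ∑ b, (P b - Q b) ^ 2 / Q b :=
        sum_mul_log_div_le_sum_sq_sub_div univ (fun b _ => hP0 b) (fun b _ => hQ0 b)
          (hP1.trans hQ1.symm)
    _ ≤ (1 / ⨅ b, Q b) * ∑ b, (P b - Q b) ^ 2 :=
        sum_div_le_one_div_mul_sum univ (fun b _ => sq_nonneg _) hmin_pos hmin_le
end

section
/- For any probability distribution P_X on a finite set A and any n ≥ 1, the minimum Euclidean distance n-type approximation P_X̂ (over n-types satisfying the same linear cost constraint) satisfies |P_X − P_X̂| ≤ √(|A|(|A|−1)) / n. -/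
/-!
Round `n P` down to integers at every letter except a cheapest one `a₀` (a minimiser of `b`),
and give `a₀` the leftover mass. Every other letter loses less than `1/n`, so `a₀` gains at most
`(|A| - 1)/n`, and the squared distance is at most `(|A| - 1)/n² + (|A| - 1)²/n² = |A|(|A| - 1)/n²`.
The cost cannot increase, since all the displaced mass is moved onto the cheapest letter.
-/

open Finset

theorem natFloor_mul_div_bounds {x : ℝ} (hx : 0 ≤ x) {n : ℕ} (hn : 0 < n) :
    0 ≤ x - ⌊n * x⌋₊ / n ∧ x - ⌊n * x⌋₊ / n ≤ 1 / n := by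
  have hn' : (0 : ℝ) < n := Nat.cast_pos.2 hn
  have hle := Nat.floor_le (mul_nonneg hn'.le hx)
  have hlt := Nat.lt_floor_add_one ((n : ℝ) * x)
  constructor
  · rw [sub_nonneg, div_le_iff₀ hn']; linarith
  · rw [sub_le_iff_le_add, ← add_div, le_div_iff₀ hn']; linarith

section

variable {A : Type*} [Fintype A]

theorem sum_sq_le_of_sum_eq_zero {D : A → ℝ} {a₀ : A} {ε : ℝ} (hsum : ∑ a, D a = 0)
    (hD : ∀ a ≠ a₀, |D a| ≤ ε) :
    ∑ a, D a ^ 2 ≤ Fintype.card A * (Fintype.card A - 1) * ε ^ 2 := by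
  classical
  have hcard : ((univ.erase a₀).card : ℝ) = Fintype.card A - 1 := by
    rw [card_erase_of_mem (mem_univ a₀), card_univ,
      Nat.cast_sub (Fintype.card_pos_iff.2 ⟨a₀⟩), Nat.cast_one]
  have hD₀ : D a₀ = -∑ a ∈ univ.erase a₀, D a := by
    linarith [add_sum_erase univ D (mem_univ a₀)]
  have habs : |D a₀| ≤ (Fintype.card A - 1) * ε :=
    calc |D a₀| ≤ ∑ a ∈ univ.erase a₀, |D a| := by rw [hD₀, abs_neg]; exact abs_sum_le_sum_abs _ _
      _ ≤ ∑ a ∈ univ.erase a₀, ε := sum_le_sum fun a ha => hD a (ne_of_mem_erase ha)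
      _ = (Fintype.card A - 1) * ε := by rw [sum_const, nsmul_eq_mul, hcard]
  have hsq₀ : D a₀ ^ 2 ≤ ((Fintype.card A - 1) * ε) ^ 2 := by
    rw [← sq_abs]; exact pow_le_pow_left₀ (abs_nonneg _) habs 2
  have hsq : ∑ a ∈ univ.erase a₀, D a ^ 2 ≤ (Fintype.card A - 1) * ε ^ 2 :=
    calc ∑ a ∈ univ.erase a₀, D a ^ 2 ≤ ∑ a ∈ univ.erase a₀, ε ^ 2 :=
          sum_le_sum fun a ha => by
            rw [← sq_abs]; exact pow_le_pow_left₀ (abs_nonneg _) (hD a (ne_of_mem_erase ha)) 2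
      _ = (Fintype.card A - 1) * ε ^ 2 := by rw [sum_const, nsmul_eq_mul, hcard]
  rw [← add_sum_erase univ _ (mem_univ a₀)]
  linarith

theorem sum_mul_nonneg_of_sum_eq_zero {D b : A → ℝ} {a₀ : A} (hsum : ∑ a, D a = 0)
    (hD : ∀ a ≠ a₀, 0 ≤ D a) (hmin : ∀ a, b a₀ ≤ b a) : 0 ≤ ∑ a, D a * b a :=
  calc 0 ≤ ∑ a, D a * (b a - b a₀) := sum_nonneg fun a _ => by
        by_cases h : a = a₀
        · simp [h]
        · exact mul_nonneg (hD a h) (sub_nonneg.2 (hmin a))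
    _ = ∑ a, D a * b a := by
        simp only [mul_sub, sum_sub_distrib, ← sum_mul, hsum, zero_mul, sub_zero]

theorem sum_natFloor_mul_le {P : A → ℝ} (hP0 : ∀ a, 0 ≤ P a) (hP1 : ∑ a, P a = 1) (n : ℕ)
    (s : Finset A) : ∑ a ∈ s, ⌊n * P a⌋₊ ≤ n := by
  have : (∑ a ∈ s, ⌊n * P a⌋₊ : ℝ) ≤ n :=
    calc (∑ a ∈ s, ⌊n * P a⌋₊ : ℝ) ≤ ∑ a ∈ s, n * P a :=
          sum_le_sum fun a _ => Nat.floor_le (mul_nonneg n.cast_nonneg (hP0 a))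
      _ ≤ ∑ a, n * P a := sum_le_sum_of_subset_of_nonneg (subset_univ s)
          fun a _ _ => mul_nonneg n.cast_nonneg (hP0 a)
      _ = n := by rw [← mul_sum, hP1, mul_one]
  exact_mod_cast this

variable [DecidableEq A]

noncomputable def floorType (n : ℕ) (P : A → ℝ) (a₀ a : A) : ℕ :=
  if a = a₀ then n - ∑ a ∈ univ.erase a₀, ⌊n * P a⌋₊ else ⌊n * P a⌋₊

theorem floorType_of_ne {n : ℕ} {P : A → ℝ} {a₀ a : A} (h : a ≠ a₀) :
    floorType n P a₀ a = ⌊n * P a⌋₊ := if_neg h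

theorem sum_floorType {P : A → ℝ} (hP0 : ∀ a, 0 ≤ P a) (hP1 : ∑ a, P a = 1) (n : ℕ) (a₀ : A) :
    ∑ a, floorType n P a₀ a = n := by
  rw [← add_sum_erase univ _ (mem_univ a₀),
    sum_congr rfl fun a ha => floorType_of_ne (ne_of_mem_erase ha)]
  simp only [floorType, if_pos]
  have := sum_natFloor_mul_le hP0 hP1 n (univ.erase a₀)
  omega

end

/-- Minimum-Euclidean-distance `n`-type approximation: for any probability vector `P` on a finite
alphabet `A` satisfying a linear cost constraint `∑ P(a) b(a) ≤ β`, and any `n ≥ 1`, there is an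
`n`-type `Q` (all masses integer multiples of `1/n`) satisfying the same cost constraint with
`|P − Q| ≤ √(|A|(|A|−1))/n`. -/
theorem stmt_13 {A : Type*} [Fintype A] (P : A → ℝ)
    (hP0 : ∀ a, 0 ≤ P a) (hP1 : ∑ a, P a = 1)
    (b : A → ℝ) (β : ℝ) (hcost : ∑ a, P a * b a ≤ β)
    (n : ℕ) (hn : 1 ≤ n) :
    ∃ Q : A → ℝ, (∀ a, 0 ≤ Q a) ∧ (∑ a, Q a = 1) ∧ (∀ a, ∃ k : ℕ, Q a = (k : ℝ) / n) ∧
      (∑ a, Q a * b a ≤ β) ∧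
      Real.sqrt (∑ a, (P a - Q a) ^ 2)
        ≤ Real.sqrt ((Fintype.card A : ℝ) * ((Fintype.card A : ℝ) - 1)) / n := by
  classical
  have : Nonempty A := by
    by_contra h
    simp [not_nonempty_iff.1 h] at hP1
  obtain ⟨a₀, hmin⟩ := Finite.exists_min b
  set Q : A → ℝ := fun a => floorType n P a₀ a / n
  have hn' : (0 : ℝ) < n := by exact_mod_cast hn
  have hQ1 : ∑ a, Q a = 1 := by
    rw [← sum_div, ← Nat.cast_sum, sum_floorType hP0 hP1, div_self hn'.ne']
  have hsum : ∑ a, (P a - Q a) = 0 := by rw [sum_sub_distrib, hP1, hQ1, sub_self]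
  have hD : ∀ a ≠ a₀, 0 ≤ P a - Q a ∧ P a - Q a ≤ 1 / n := fun a ha => by
    simp only [Q, floorType_of_ne ha]; exact natFloor_mul_div_bounds (hP0 a) hn
  refine ⟨Q, fun a => by positivity, hQ1, fun a => ⟨_, rfl⟩, ?_, ?_⟩
  · have := sum_mul_nonneg_of_sum_eq_zero hsum (fun a ha => (hD a ha).1) hmin
    simp only [sub_mul, sum_sub_distrib] at this
    linarith
  · have := sum_sq_le_of_sum_eq_zero hsum fun a ha => abs_le.2 ⟨by linarith [hD a ha], (hD a ha).2⟩
    calc Real.sqrt (∑ a, (P a - Q a) ^ 2)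
        ≤ Real.sqrt (Fintype.card A * (Fintype.card A - 1) * (1 / n) ^ 2) := Real.sqrt_le_sqrt this
      _ = Real.sqrt (Fintype.card A * (Fintype.card A - 1)) / n := by
        rw [Real.sqrt_mul' _ (sq_nonneg _), Real.sqrt_sq (by positivity), mul_one_div]
end

section
/- Let P_{X̂ⁿ} be the equiprobable distribution on all sequences xⁿ ∈ Aⁿ of a fixed n-type P_X̂ (over finite alphabet A), let P_{Yⁿ} be its induced output through a memoryless channel P_{Y|X}^n to finite alphabet B, and let P_{Ŷⁿ} = P_Ŷ × ⋯ × P_Ŷ be the product output induced by the single-letter P_X̂. Then for all yⁿ with P_{Yⁿ}(yⁿ) > 0, the log-likelihood ratio satisfies log(P_{Yⁿ}(yⁿ)/P_{Ŷⁿ}(yⁿ)) ≤ (1/2)(|supp(P_X̂)| − 1) log n + c for some constant c independent of n and yⁿ, for all n large enough. -/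
/-!
The sequences of type `k` form one orbit of the permutation action on `Aⁿ`, so orbit–stabilizer
gives `|T| · ∏ₐ kₐ! = n!`. Every sequence of `T` has the same i.i.d. probability
`Q = ∏ₐ (kₐ/n)^kₐ`, so the i.i.d. output satisfies `P_Ŷⁿ(y) ≥ Q · ∑_{x ∈ T} Wⁿ(y|x)` and the
likelihood ratio is at most `1/(|T| Q)`. Stirling's lower bound for `n!` and upper bound for each
`kₐ!` with `kₐ ≠ 0` then give `-log (|T| Q) ≤ (s - 1)/2 · log n + s`, with `s` the support size.
-/

open Finset Real

theorem log_factorial_le_stirling {m : ℕ} (hm : m ≠ 0) :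
    log m.factorial ≤ m * log m - m + log m / 2 + 1 := by
  -- `stirlingSeq` decreases from `stirlingSeq 1 = e / √2`, which is where the constant `1` comes from.
  have hseq : log (Stirling.stirlingSeq m) ≤ log (Stirling.stirlingSeq 1) := by
    obtain ⟨j, rfl⟩ := Nat.exists_eq_succ_of_ne_zero hm
    exact Stirling.log_stirlingSeq'_antitone (Nat.zero_le j)
  have hm' : (m : ℝ) ≠ 0 := Nat.cast_ne_zero.mpr hm
  rw [Stirling.log_stirlingSeq_formula, Stirling.log_stirlingSeq_formula, log_mul two_ne_zero hm',
    log_div hm' (exp_pos 1).ne', log_exp] at hseq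
  norm_num at hseq
  linarith

theorem log_factorial_sub_mul_log_add_le {m n : ℕ} (hm : m ≠ 0) (hmn : m ≤ n) :
    log m.factorial - m * log m + m ≤ log n / 2 + 1 := by
  have hlog : log m ≤ log n :=
    log_le_log (Nat.cast_pos.mpr (Nat.pos_of_ne_zero hm)) (Nat.cast_le.mpr hmn)
  linarith [log_factorial_le_stirling hm]

theorem cast_div_pow_self_pos {m n : ℕ} (hn : n ≠ 0) : 0 < ((m : ℝ) / n) ^ m := by
  rcases eq_or_ne m 0 with rfl | hm
  · simp
  · positivity

theorem log_prod_cast_div_pow_self {A : Type*} [Fintype A] {n : ℕ} (hn : n ≠ 0) {k : A → ℕ}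
    (hk : ∑ a, k a = n) :
    log (∏ a, ((k a : ℝ) / n) ^ k a) = ∑ a, k a * log (k a) - n * log n := by
  have hlogn : (n : ℝ) * log n = ∑ a, k a * log n := by rw [← sum_mul, ← Nat.cast_sum, hk]
  rw [log_prod fun a _ => (cast_div_pow_self_pos hn).ne', hlogn, ← sum_sub_distrib]
  refine sum_congr rfl fun a _ => ?_
  rcases eq_or_ne (k a) 0 with h | h
  · simp [h]
  · rw [log_pow, log_div (Nat.cast_ne_zero.mpr h) (Nat.cast_ne_zero.mpr hn)]
    ring

section TypeClass

variable {ι A : Type*} [Fintype ι] [DecidableEq ι] [Fintype A] [DecidableEq A]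

variable (ι) in
def typeClass (k : A → ℕ) : Finset (ι → A) :=
  univ.filter fun x => ∀ a, #{i | x i = a} = k a

theorem mem_typeClass {k : A → ℕ} {x : ι → A} :
    x ∈ typeClass ι k ↔ ∀ a, #{i | x i = a} = k a := by
  simp [typeClass]

theorem coe_typeClass_eq_orbit {k : A → ℕ} {x₀ : ι → A} (hx₀ : x₀ ∈ typeClass ι k) :
    (typeClass ι k : Set (ι → A)) = MulAction.orbit (Equiv.Perm ι)ᵈᵐᵃ x₀ := by
  rw [mem_typeClass] at hx₀
  ext x
  rw [mem_coe, mem_typeClass, MulAction.mem_orbit_iff]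
  constructor
  · intro hx
    let e : ∀ a, {i // x i = a} ≃ {i // x₀ i = a} := fun a =>
      Fintype.equivOfCardEq (by rw [Fintype.card_subtype, Fintype.card_subtype, hx, hx₀])
    exact ⟨DomMulAct.mk (Equiv.ofFiberEquiv e), funext fun i => Equiv.ofFiberEquiv_map e i⟩
  · rintro ⟨g, rfl⟩ a
    rw [← hx₀ a]
    exact card_equiv (DomMulAct.mk.symm g) fun i => by simp [DomMulAct.smul_apply]

theorem card_typeClass_mul_prod_factorial {k : A → ℕ} {x₀ : ι → A}
    (hx₀ : x₀ ∈ typeClass ι k) :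
    #(typeClass ι k) * ∏ a, (k a).factorial = (Fintype.card ι).factorial := by
  have hstab :
      Nat.card (MulAction.stabilizer (Equiv.Perm ι)ᵈᵐᵃ x₀) = ∏ a, (k a).factorial := by
    rw [← Nat.card_congr (Equiv.subtypeEquiv (p := fun g : Equiv.Perm ι => x₀ ∘ g = x₀)
        DomMulAct.mk fun _ => DomMulAct.mem_stabilizer_iff.symm),
      Nat.card_eq_fintype_card, DomMulAct.stabilizer_card]
    simp only [Fintype.card_subtype, (mem_typeClass.mp hx₀)]
  rw [← hstab, mul_comm, ← Set.ncard_coe_finset, coe_typeClass_eq_orbit hx₀,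
    ← MulAction.index_stabilizer, Subgroup.card_mul_index, Nat.card_congr DomMulAct.mk.symm,
    Nat.card_perm, Nat.card_eq_fintype_card]

theorem log_card_typeClass {k : A → ℕ} {x₀ : ι → A} (hx₀ : x₀ ∈ typeClass ι k) :
    log #(typeClass ι k) = log (Fintype.card ι).factorial - ∑ a, log (k a).factorial := by
  have hcount : (#(typeClass ι k) : ℝ) * ∏ a, ((k a).factorial : ℝ)
      = (Fintype.card ι).factorial := by
    exact_mod_cast card_typeClass_mul_prod_factorial hx₀
  rw [← hcount, log_mul (Nat.cast_ne_zero.mpr (card_ne_zero_of_mem hx₀)) (by positivity),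
    log_prod fun a _ => by positivity]
  ring

theorem prod_comp_eq_prod_pow_of_mem_typeClass {M : Type*} [CommMonoid M] (f : A → M)
    {k : A → ℕ} {x : ι → A} (hx : x ∈ typeClass ι k) :
    ∏ i, f (x i) = ∏ a, f a ^ k a := by
  rw [← prod_fiberwise' univ x f]
  exact prod_congr rfl fun a _ => by rw [prod_const, mem_typeClass.mp hx a]

theorem prod_pow_mul_sum_typeClass_le {R : Type*} [CommSemiring R] [PartialOrder R]
    [IsOrderedRing R] {p : A → R} (hp : ∀ a, 0 ≤ p a) {V : ι → A → R} (hV : ∀ i a, 0 ≤ V i a)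
    (k : A → ℕ) :
    (∏ a, p a ^ k a) * ∑ x ∈ typeClass ι k, ∏ i, V i (x i) ≤ ∏ i, ∑ a, p a * V i a :=
  calc (∏ a, p a ^ k a) * ∑ x ∈ typeClass ι k, ∏ i, V i (x i)
      = ∑ x ∈ typeClass ι k, ∏ i, p (x i) * V i (x i) := by
        rw [mul_sum]
        refine sum_congr rfl fun x hx => ?_
        rw [prod_mul_distrib, prod_comp_eq_prod_pow_of_mem_typeClass p hx]
    _ ≤ ∑ x : ι → A, ∏ i, p (x i) * V i (x i) :=
        sum_le_sum_of_subset_of_nonneg (subset_univ _) fun x _ _ =>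
          prod_nonneg fun i _ => mul_nonneg (hp _) (hV _ _)
    _ = ∏ i, ∑ a, p a * V i a := by rw [prod_univ_sum, Fintype.piFinset_univ]

theorem log_likelihoodRatio_typeClass_le {p : A → ℝ} (hp : ∀ a, 0 ≤ p a) {V : ι → A → ℝ}
    (hV : ∀ i a, 0 ≤ V i a) {k : A → ℕ} (hQ : 0 < ∏ a, p a ^ k a)
    (hpos : 0 < (∑ x ∈ typeClass ι k, ∏ i, V i (x i)) / #(typeClass ι k)) :
    log ((∑ x ∈ typeClass ι k, ∏ i, V i (x i)) / #(typeClass ι k) / ∏ i, ∑ a, p a * V i a)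
      ≤ -log (#(typeClass ι k) * ∏ a, p a ^ k a) := by
  set S := ∑ x ∈ typeClass ι k, ∏ i, V i (x i)
  set t : ℝ := (#(typeClass ι k) : ℝ)
  set Q := ∏ a, p a ^ k a
  obtain ⟨hS, ht⟩ : 0 < S ∧ 0 < t :=
    (div_pos_iff.mp hpos).resolve_right fun h => (Nat.cast_nonneg _).not_gt h.2
  have hP : Q * S ≤ ∏ i, ∑ a, p a * V i a := prod_pow_mul_sum_typeClass_le hp hV k
  calc log (S / t / ∏ i, ∑ a, p a * V i a) ≤ log (S / t / (Q * S)) :=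
        log_le_log (div_pos hpos ((mul_pos hQ hS).trans_le hP))
          (div_le_div_of_nonneg_left hpos.le (mul_pos hQ hS) hP)
    _ = -log (t * Q) := by
        rw [← log_inv]
        congr 1
        field_simp

theorem neg_log_card_typeClass_mul_prod_pow_le {n : ℕ} (hn : n ≠ 0) {k : A → ℕ}
    (hk : ∑ a, k a = n) {x₀ : Fin n → A} (hx₀ : x₀ ∈ typeClass (Fin n) k) :
    -log (#(typeClass (Fin n) k) * ∏ a, ((k a : ℝ) / n) ^ k a)
      ≤ 1 / 2 * (#{a | k a ≠ 0} - 1) * log n + Fintype.card A := by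
  have hfact : n * log n - n - log n.factorial ≤ -(log n / 2) := by
    have := Stirling.le_log_factorial_stirling hn
    have : 0 ≤ log (2 * π) := log_nonneg (by linarith [pi_gt_three])
    linarith
  have hletters : ∑ a, (log (k a).factorial - k a * log (k a) + k a)
      ≤ #{a | k a ≠ 0} * (log n / 2 + 1) := by
    rw [← sum_filter_of_ne (p := fun a => k a ≠ 0) fun a _ h => by contrapose! h; simp [h],
      ← nsmul_eq_mul]
    refine sum_le_card_nsmul _ _ _ fun a ha =>
      log_factorial_sub_mul_log_add_le (mem_filter.mp ha).2 ?_
    rw [← hk]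
    exact single_le_sum (fun _ _ => Nat.zero_le _) (mem_univ a)
  have hsum : ∑ a, (k a : ℝ) = n := by exact_mod_cast hk
  have hcard : (#{a | k a ≠ 0} : ℝ) ≤ Fintype.card A := Nat.cast_le.mpr (card_le_univ _)
  rw [log_mul (Nat.cast_ne_zero.mpr (card_ne_zero_of_mem hx₀))
      (prod_pos fun a _ => cast_div_pow_self_pos hn).ne',
    log_card_typeClass hx₀, Fintype.card_fin, log_prod_cast_div_pow_self hn hk]
  rw [sum_add_distrib, sum_sub_distrib, hsum] at hletters
  linarith

end TypeClass

theorem stmt_15_general {A B : Type*} [Fintype A] [DecidableEq A]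
    (W : A → B → ℝ) (hW0 : ∀ a b, 0 ≤ W a b) :
    ∃ (c : ℝ) (N : ℕ), ∀ n : ℕ, N ≤ n → ∀ k : A → ℕ, (∑ a, k a = n) →
      ∀ y : Fin n → B,
        0 < (∑ x ∈ Finset.univ.filter
              (fun x : Fin n → A => ∀ a, (Finset.univ.filter fun i => x i = a).card = k a),
              ∏ i, W (x i) (y i))
            / (Finset.univ.filter
              (fun x : Fin n → A => ∀ a, (Finset.univ.filter fun i => x i = a).card = k a)).card →
        Real.log
            ((∑ x ∈ Finset.univ.filter
                (fun x : Fin n → A => ∀ a, (Finset.univ.filter fun i => x i = a).card = k a),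
                ∏ i, W (x i) (y i))
              / (Finset.univ.filter
                (fun x : Fin n → A => ∀ a, (Finset.univ.filter fun i => x i = a).card = k a)).card
              / ∏ i, ∑ a, ((k a : ℝ) / n) * W a (y i))
          ≤ (1 / 2) * (((Finset.univ.filter fun a : A => k a ≠ 0).card : ℝ) - 1) * Real.log n
              + c := by
  refine ⟨Fintype.card A, 1, fun n hn k hk y hpos => ?_⟩
  obtain ⟨x₀, hx₀⟩ : (typeClass (Fin n) k).Nonempty :=
    card_ne_zero.mp (Nat.cast_ne_zero.mp (div_ne_zero_iff.mp hpos.ne').2)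
  have hn : n ≠ 0 := Nat.one_le_iff_ne_zero.mp hn
  calc _ ≤ -log (#(typeClass (Fin n) k) * ∏ a, ((k a : ℝ) / n) ^ k a) :=
        log_likelihoodRatio_typeClass_le (fun a => by positivity) (fun i a => hW0 a (y i))
          (prod_pos fun a _ => cast_div_pow_self_pos hn) hpos
    _ ≤ _ := neg_log_card_typeClass_mul_prod_pow_le hn hk hx₀

/-- Lemma 2: let `P_{Xⁿ}` be equiprobable on the sequences of a fixed `n`-type (with counts `k`),
`P_{Yⁿ}` its induced output through the memoryless channel `W`, and `P_{Ŷⁿ}` the i.i.d. output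
induced by the single-letter type. Then there is a constant `c` (uniform over types) such that for
all large enough `n`, every type `k` and every `yⁿ` with `P_{Yⁿ}(yⁿ) > 0`,
`log (P_{Yⁿ}(yⁿ)/P_{Ŷⁿ}(yⁿ)) ≤ (1/2)(|supp| − 1) log n + c`. -/
theorem stmt_15 {A B : Type*} [Fintype A] [DecidableEq A] [Fintype B]
    (W : A → B → ℝ) (hW0 : ∀ a b, 0 ≤ W a b) (hW1 : ∀ a, ∑ b, W a b = 1) :
    ∃ (c : ℝ) (N : ℕ), ∀ n : ℕ, N ≤ n → ∀ k : A → ℕ, (∑ a, k a = n) →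
      ∀ y : Fin n → B,
        0 < (∑ x ∈ Finset.univ.filter
              (fun x : Fin n → A => ∀ a, (Finset.univ.filter fun i => x i = a).card = k a),
              ∏ i, W (x i) (y i))
            / (Finset.univ.filter
              (fun x : Fin n → A => ∀ a, (Finset.univ.filter fun i => x i = a).card = k a)).card →
        Real.log
            ((∑ x ∈ Finset.univ.filter
                (fun x : Fin n → A => ∀ a, (Finset.univ.filter fun i => x i = a).card = k a),
                ∏ i, W (x i) (y i))
              / (Finset.univ.filter
                (fun x : Fin n → A => ∀ a, (Finset.univ.filter fun i => x i = a).card = k a)).card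
              / ∏ i, ∑ a, ((k a : ℝ) / n) * W a (y i))
          ≤ (1 / 2) * (((Finset.univ.filter fun a : A => k a ≠ 0).card : ℝ) - 1) * Real.log n
              + c :=
  stmt_15_general W hW0
end

section
/- For the exponential-noise channel, let Xⁿ be uniform on the simplex {xⁿ ∈ ℝ₊ⁿ : ∑ xᵢ = nβ}, Yⁿ = Xⁿ + Nⁿ with Nⁿ i.i.d. exponential(1), and Y^{n⋆} i.i.d. exponential with mean 1+β. Then the log-likelihood ratio log(dP_{Yⁿ}/dP_{Y^{n⋆}})(yⁿ) is a function L(t,n) of t = ∑ᵢ yᵢ only, and sup_{n≥1, t} L(t, n) = β/(1+β) + log_e(1+β); in particular the log-likelihood ratio is uniformly bounded by a constant independent of n. -/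
/-- Erlang density with scale `a` and shape `n`: `t^{n−1} e^{−t/a} / (aⁿ (n−1)!)`. -/
noncomputable def erlangDens (a : ℝ) (n : ℕ) (t : ℝ) : ℝ :=
  t ^ (n - 1) * Real.exp (-t / a) / (a ^ n * (Nat.factorial (n - 1) : ℝ))

/-- `L(t,n) = nβ − (β/(1+β))t + n log(1+β) + (n−1) log(1 − nβ/t)` (natural logs). -/
noncomputable def Lfun (β t : ℝ) (n : ℕ) : ℝ :=
  n * β - (β / (1 + β)) * t + n * Real.log (1 + β)
    + ((n : ℝ) - 1) * Real.log (1 - n * β / t)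

/-!
Write `L(t, n) = log(1+β) + nβ − βt/(1+β) + (n−1) log((1+β)(1 − nβ/t))` and apply
`log x ≤ x − 1`: with `s = t − nβ`, what remains below `β/(1+β) + log(1+β)` is
`β((s − (n−1))² + βs + (n−1)) / (t(1+β)) ≥ 0`.
The bound is approached by `n = 1`, `t ↓ β`.
-/

open Real Filter Topology

section

variable {a β t : ℝ} {n : ℕ}

theorem erlangDens_pos (ha : 0 < a) (ht : 0 < t) : 0 < erlangDens a n t := by
  unfold erlangDens
  positivity

theorem log_erlangDens (ha : 0 < a) (ht : 0 < t) :
    log (erlangDens a n t) =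
      ((n - 1 : ℕ) : ℝ) * log t - t / a - n * log a - log (n - 1).factorial := by
  have hfac : (0 : ℝ) < (n - 1).factorial := by positivity
  unfold erlangDens
  rw [log_div (by positivity) (by positivity), log_mul (by positivity) (exp_pos _).ne',
    log_mul (by positivity) hfac.ne', log_pow, log_pow, log_exp]
  ring

theorem log_erlangDens_shift_div (hβ : 0 < β) (hn : 1 ≤ n) (ht : n * β < t) :
    log (erlangDens 1 n (t - n * β) / erlangDens (1 + β) n t) = Lfun β t n := by
  have hnβ : 0 < (n : ℝ) * β := mul_pos (by exact_mod_cast hn) hβ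
  have ht₀ : 0 < t := hnβ.trans ht
  have hs : 0 < t - n * β := sub_pos.mpr ht
  have h1β : 0 < 1 + β := by linarith
  have hratio : log (1 - n * β / t) = log (t - n * β) - log t := by
    rw [← log_div hs.ne' ht₀.ne', sub_div, div_self ht₀.ne']
  rw [log_div (erlangDens_pos one_pos hs).ne' (erlangDens_pos h1β ht₀).ne',
    log_erlangDens one_pos hs, log_erlangDens h1β ht₀, Lfun, hratio, Nat.cast_sub hn, log_one]
  field_simp
  ring

theorem Lfun_le (hβ : 0 < β) (hn : 1 ≤ n) (ht : n * β < t) :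
    Lfun β t n ≤ β / (1 + β) + log (1 + β) := by
  have hn₁ : (0 : ℝ) ≤ n - 1 := sub_nonneg.mpr (by exact_mod_cast hn)
  have ht₀ : 0 < t := (mul_pos (by exact_mod_cast hn) hβ).trans ht
  have hs : 0 < t - n * β := sub_pos.mpr ht
  have h1β : 0 < 1 + β := by linarith
  have hx : 0 < 1 - n * β / t := by rwa [sub_pos, div_lt_one ht₀]
  have hgap :
      0 ≤ β * ((t - n * β - (n - 1)) ^ 2 + β * (t - n * β) + (n - 1)) / (t * (1 + β)) := by
    positivity
  calc Lfun β t n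
      = log (1 + β) + n * β - β / (1 + β) * t
          + (n - 1) * log ((1 + β) * (1 - n * β / t)) := by
        rw [Lfun, log_mul h1β.ne' hx.ne']
        ring
    _ ≤ log (1 + β) + n * β - β / (1 + β) * t
          + (n - 1) * ((1 + β) * (1 - n * β / t) - 1) := by
        gcongr
        exact log_le_sub_one_of_pos (mul_pos h1β hx)
    _ = β / (1 + β) + log (1 + β)
          - β * ((t - n * β - (n - 1)) ^ 2 + β * (t - n * β) + (n - 1)) / (t * (1 + β)) := by
        field_simp
        ring
    _ ≤ β / (1 + β) + log (1 + β) := sub_le_self _ hgap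

theorem Lfun_one (β t : ℝ) : Lfun β t 1 = β - β / (1 + β) * t + log (1 + β) := by
  simp [Lfun]

theorem tendsto_Lfun_one (hβ : 0 < β) :
    Tendsto (fun t ↦ Lfun β t 1) (𝓝[>] β) (𝓝 (β / (1 + β) + log (1 + β))) := by
  have hlim : β / (1 + β) + log (1 + β) = β - β / (1 + β) * β + log (1 + β) := by
    field_simp
    ring
  simp only [Lfun_one, hlim]
  exact ((continuous_const.sub (continuous_const.mul continuous_id)).add
    continuous_const).continuousAt.tendsto.mono_left nhdsWithin_le_nhds

end

/-- The log-likelihood ratio is expressed through the densities of `t = ∑ᵢ yᵢ`: the Erlang(1)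
density shifted by the total input `nβ` for `Yⁿ`, and the Erlang(1+β) density for `Y^{n⋆}`. -/
theorem stmt_18 (β : ℝ) (hβ : 0 < β) :
    (∀ n : ℕ, 1 ≤ n → ∀ t : ℝ, n * β < t →
      Real.log (erlangDens 1 n (t - n * β) / erlangDens (1 + β) n t) = Lfun β t n) ∧
    IsLUB {r : ℝ | ∃ n : ℕ, 1 ≤ n ∧ ∃ t : ℝ, n * β < t ∧ r = Lfun β t n}
      (β / (1 + β) + Real.log (1 + β)) := by
  refine ⟨fun n hn t ht ↦ log_erlangDens_shift_div hβ hn ht,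
    isLUB_of_mem_closure ?_ (mem_closure_of_tendsto (tendsto_Lfun_one hβ) ?_)⟩
  · rintro r ⟨n, hn, t, ht, rfl⟩
    exact Lfun_le hβ hn ht
  · filter_upwards [self_mem_nhdsWithin] with t ht
    exact ⟨1, le_rfl, t, by simpa using ht, rfl⟩
end

section
/- Let W_i(z), i = 1,…,n, be independent real random variables parameterized by z in a metric space D, with D_n(z) = (1/n)∑ E[W_i(z)], V_n(z) = (1/n)∑ Var(W_i(z)), T_n(z) = (1/n)∑ E|W_i(z) − E W_i(z)|³. Suppose there exist z⋆ ∈ D, sequences D_n⋆, and constants ℓ₁, ℓ₂, ℓ₃, F₁, F₂, T_max > 0 such that for all z: D_n⋆ − D_n(z) ≥ ℓ₁ d²(z,z⋆) − (ℓ₂/√n) d(z,z⋆) − ℓ₃/n, V_n(z) ≤ F₁ d(z,z⋆) + F₂/√n (i.e., V_n⋆ = 0), and T_n(z) ≤ T_max. Then for any 0 ≤ b ≤ 1/6 and any A > 0 there exists K ≥ 0 such that for all Δ > A/n^{1/2 + b} and all sufficiently large n: min_{z∈D} P[∑ᵢ W_i(z) ≤ n(D_n⋆ + Δ)] ≥ 1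 − (K/A^{3/2}) · n^{−(1/4 − 3b/2)}. -/
open MeasureTheory ProbabilityTheory Filter

/-!
Chebyshev's inequality bounds the failure probability by `Var S / (n (D⋆ + Δ) - E S)²`, where
`S = ∑ᵢ Wᵢ(z)`. Once `n Δ` is large, the quadratic decay of the mean gives
`n (D⋆ + Δ) - E S ≥ (n Δ + n ℓ₁ ζ²) / 2` with `ζ = d(z, z⋆)`, while `Var S ≤ n F₁ ζ + √n F₂`.
The ratio is largest for `ζ` of order `√Δ`, and is `O(√n / (n Δ)^{3/2})` uniformly in `ζ`;
for `Δ > A n^{-(1/2 + b)}` this is `O(A^{-3/2} n^{-(1/4 - 3b/2)})`.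
-/

theorem one_sub_variance_div_sq_le_measureReal_le {Ω : Type*} [MeasurableSpace Ω]
    {μ : Measure Ω} [IsProbabilityMeasure μ] {X : Ω → ℝ} (hX : MemLp X 2 μ) {x : ℝ}
    (hx : μ[X] < x) :
    1 - variance X μ / (x - μ[X]) ^ 2 ≤ μ.real {ω | X ω ≤ x} := by
  have htail : μ.real {ω | X ω ≤ x}ᶜ ≤ variance X μ / (x - μ[X]) ^ 2 := by
    refine (measureReal_mono fun ω hω => ?_).trans <|
      ENNReal.toReal_le_of_le_ofReal (div_nonneg (variance_nonneg _ _) (sq_nonneg _))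
        (meas_ge_le_variance_div_sq hX (sub_pos.2 hx))
    simp only [Set.mem_compl_iff, Set.mem_ofPred_eq, not_le] at hω ⊢
    exact (sub_le_sub_right hω.le _).trans (le_abs_self _)
  have hmeas : NullMeasurableSet {ω | X ω ≤ x} μ :=
    nullMeasurableSet_le hX.aestronglyMeasurable.aemeasurable aemeasurable_const
  rw [measureReal_compl₀ hmeas, probReal_univ] at htail
  linarith

-- With `w = √n ζ` and `r = √(n Δ)` this is the `ζ`-uniform bound on the `F₁` part of the ratio.
theorem mul_mul_pow_three_le {l w r : ℝ} (hl : 0 < l) (hw : 0 ≤ w) (hr : 0 ≤ r) :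
    l * w * r ^ 3 ≤ (l + 1) * (r ^ 2 + l * w ^ 2) ^ 2 := by
  have hr2 : r ^ 2 ≤ r ^ 2 + l * w ^ 2 := le_add_of_nonneg_right (by positivity)
  rcases le_total w r with h | h
  · calc l * w * r ^ 3 ≤ l * r * r ^ 3 := by gcongr
      _ = l * (r ^ 2) ^ 2 := by ring
      _ ≤ l * (r ^ 2 + l * w ^ 2) ^ 2 := by gcongr
      _ ≤ (l + 1) * (r ^ 2 + l * w ^ 2) ^ 2 := by gcongr; linarith
  · calc l * w * r ^ 3 ≤ l * w * r ^ 2 * w := by rw [pow_succ, ← mul_assoc]; gcongr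
      _ ≤ (r ^ 2 + l * w ^ 2) ^ 2 := by nlinarith [sq_nonneg (r ^ 2 - l * w ^ 2)]
      _ ≤ (l + 1) * (r ^ 2 + l * w ^ 2) ^ 2 := le_mul_of_one_le_left (by positivity) (by linarith)

theorem mul_div_sq_le_of_le_mul_add {n t ζ v c l1 F1 F2 : ℝ} (hn : 0 < n) (ht : 0 < t)
    (hζ : 0 ≤ ζ) (hl1 : 0 < l1) (hF1 : 0 ≤ F1) (hF2 : 0 ≤ F2)
    (hv : v ≤ F1 * ζ + F2 / √n) (hc : (t + n * l1 * ζ ^ 2) / 2 ≤ c) :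
    n * v / c ^ 2 ≤ 4 * √n / (t * √t) * (F1 * (1 + 1 / l1) + F2 / √t) := by
  obtain ⟨u, hu, rfl⟩ : ∃ u, 0 < u ∧ n = u ^ 2 := ⟨√n, by positivity, (Real.sq_sqrt hn.le).symm⟩
  obtain ⟨r, hr, rfl⟩ : ∃ r, 0 < r ∧ t = r ^ 2 := ⟨√t, by positivity, (Real.sq_sqrt ht.le).symm⟩
  rw [Real.sqrt_sq hu.le] at hv ⊢
  rw [Real.sqrt_sq hr.le]
  set w := u * ζ
  set P := r ^ 2 + l1 * w ^ 2
  have hP : 0 < P := by positivity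
  have hcP : P ^ 2 / 4 ≤ c ^ 2 := by
    rw [show P ^ 2 / 4 = ((r ^ 2 + u ^ 2 * l1 * ζ ^ 2) / 2) ^ 2 by ring]
    gcongr
  have hnum : u ^ 2 * v ≤ u * (F1 * w + F2) := by
    calc u ^ 2 * v ≤ u ^ 2 * (F1 * ζ + F2 / u) := by gcongr
      _ = u * (F1 * w + F2) := by field_simp; ring
  have hlinear : F1 * w / P ^ 2 ≤ F1 * (1 + 1 / l1) / r ^ 3 := by
    rw [div_le_div_iff₀ (by positivity) (by positivity)]
    have hcore : w * r ^ 3 ≤ (1 + 1 / l1) * P ^ 2 := by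
      have := mul_mul_pow_three_le hl1 (by positivity : 0 ≤ w) hr.le
      rw [← mul_le_mul_iff_of_pos_left hl1]
      field_simp
      linarith
    calc F1 * w * r ^ 3 = F1 * (w * r ^ 3) := by ring
      _ ≤ F1 * ((1 + 1 / l1) * P ^ 2) := by gcongr
      _ = F1 * (1 + 1 / l1) * P ^ 2 := by ring
  have hconst : F2 / P ^ 2 ≤ F2 / r / r ^ 3 := by
    rw [div_div, ← pow_succ']
    gcongr
    calc r ^ (3 + 1) = (r ^ 2) ^ 2 := by ring
      _ ≤ P ^ 2 := by gcongr; exact le_add_of_nonneg_right (by positivity)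
  calc u ^ 2 * v / c ^ 2 ≤ u * (F1 * w + F2) / (P ^ 2 / 4) := by gcongr
    _ = 4 * u * (F1 * w / P ^ 2 + F2 / P ^ 2) := by field_simp
    _ ≤ 4 * u * (F1 * (1 + 1 / l1) / r ^ 3 + F2 / r / r ^ 3) := by gcongr
    _ = 4 * u / (r ^ 2 * r) * (F1 * (1 + 1 / l1) + F2 / r) := by field_simp

theorem half_add_le_of_quadratic_gap {l1 l2 l3 n ζ g t : ℝ} (hl1 : 0 < l1) (hn : 0 < n)
    (hgap : g ≥ l1 * ζ ^ 2 - l2 / √n * ζ - l3 / n) (ht : l2 ^ 2 / l1 + 2 * l3 ≤ t) :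
    (t + n * l1 * ζ ^ 2) / 2 ≤ t + n * g := by
  obtain ⟨u, hu, rfl⟩ : ∃ u, 0 < u ∧ n = u ^ 2 := ⟨√n, by positivity, (Real.sq_sqrt hn.le).symm⟩
  rw [Real.sqrt_sq hu.le] at hgap
  have hscaled : u ^ 2 * l1 * ζ ^ 2 - u * l2 * ζ - l3 ≤ u ^ 2 * g := by
    have := mul_le_mul_of_nonneg_left hgap (sq_nonneg u)
    field_simp at this
    linarith
  have hamgm : u * l2 * ζ ≤ u ^ 2 * l1 * ζ ^ 2 / 2 + l2 ^ 2 / l1 / 2 := by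
    have : 0 ≤ (l1 * u * ζ - l2) ^ 2 / l1 := by positivity
    have hexp : (l1 * u * ζ - l2) ^ 2 / l1
        = l1 * u ^ 2 * ζ ^ 2 - 2 * u * l2 * ζ + l2 ^ 2 / l1 := by
      field_simp; ring
    linarith
  linarith

theorem mul_rpow_lt_mul_of_div_rpow_lt {n A b Δ : ℝ} (hn : 0 < n)
    (hΔ : A / n ^ (1 / 2 + b) < Δ) : A * n ^ (1 / 2 - b) < n * Δ := by
  rw [div_lt_iff₀ (by positivity)] at hΔ
  calc A * n ^ (1 / 2 - b) < Δ * n ^ (1 / 2 + b) * n ^ (1 / 2 - b) := by gcongr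
    _ = n * Δ := by rw [mul_assoc, ← Real.rpow_add hn]; norm_num; ring

theorem sqrt_div_mul_sqrt_le {n A b Δ : ℝ} (hn : 0 < n) (hA : 0 < A)
    (hΔ : A / n ^ (1 / 2 + b) < Δ) :
    √n / (n * Δ * √(n * Δ)) ≤ 1 / A ^ (3 / 2 : ℝ) * (1 / n ^ (1 / 4 - 3 * b / 2)) := by
  have hlow := mul_rpow_lt_mul_of_div_rpow_lt hn hΔ
  have hpos : 0 < A * n ^ (1 / 2 - b) := by positivity
  have hnΔ : 0 ≤ n * Δ := hpos.le.trans hlow.le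
  have heq : A * n ^ (1 / 2 - b) * √(A * n ^ (1 / 2 - b))
      = A ^ (3 / 2 : ℝ) * n ^ (1 / 4 - 3 * b / 2) * √n := by
    rw [Real.sqrt_eq_rpow, Real.sqrt_eq_rpow, Real.mul_rpow hA.le (by positivity),
      ← Real.rpow_mul hn.le, show (3 / 2 : ℝ) = 1 + 1 / 2 by norm_num, Real.rpow_add hA,
      Real.rpow_one]
    have hexp : n ^ (1 / 2 - b) * n ^ ((1 / 2 - b) * (1 / 2))
        = n ^ (1 / 4 - 3 * b / 2) * n ^ (1 / 2 : ℝ) := by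
      rw [← Real.rpow_add hn, ← Real.rpow_add hn]; ring_nf
    linear_combination A * A ^ (1 / 2 : ℝ) * hexp
  calc √n / (n * Δ * √(n * Δ)) ≤ √n / (A * n ^ (1 / 2 - b) * √(A * n ^ (1 / 2 - b))) := by
        gcongr
    _ = 1 / A ^ (3 / 2 : ℝ) * (1 / n ^ (1 / 4 - 3 * b / 2)) := by
        rw [heq]; field_simp

theorem mul_div_sq_le_rate {n Δ A b ζ v c l1 F1 F2 : ℝ} (hn : 0 < n) (hA : 0 < A)
    (hl1 : 0 < l1) (hF1 : 0 ≤ F1) (hF2 : 0 ≤ F2) (hζ : 0 ≤ ζ)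
    (hΔ : A / n ^ (1 / 2 + b) < Δ) (hAΔ : A ≤ n * Δ)
    (hv : v ≤ F1 * ζ + F2 / √n) (hc : (n * Δ + n * l1 * ζ ^ 2) / 2 ≤ c) :
    n * v / c ^ 2
      ≤ 4 * (F1 * (1 + 1 / l1) + F2 / √A) / A ^ (3 / 2 : ℝ) * (1 / n ^ (1 / 4 - 3 * b / 2)) :=
  calc n * v / c ^ 2
      ≤ 4 * (√n / (n * Δ * √(n * Δ))) * (F1 * (1 + 1 / l1) + F2 / √(n * Δ)) := by
        rw [← mul_div_assoc]
        exact mul_div_sq_le_of_le_mul_add hn (by linarith) hζ hl1 hF1 hF2 hv hc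
    _ ≤ 4 * (1 / A ^ (3 / 2 : ℝ) * (1 / n ^ (1 / 4 - 3 * b / 2)))
          * (F1 * (1 + 1 / l1) + F2 / √A) := by
        gcongr
        exact sqrt_div_mul_sqrt_le hn hA hΔ
    _ = _ := by ring

theorem eventually_le_mul_natCast_rpow {b A : ℝ} (hb : b < 1 / 2) (hA : 0 < A) (M : ℝ) :
    ∀ᶠ n : ℕ in atTop, M ≤ A * (n : ℝ) ^ (1 / 2 - b) :=
  (((tendsto_rpow_atTop (sub_pos.2 hb)).comp tendsto_natCast_atTop_atTop).const_mul_atTop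
    hA).eventually_ge_atTop M

theorem stmt_19_general {D : Type*} [MetricSpace D]
    {Ω : Type*} [MeasurableSpace Ω] (μ : Measure Ω) [IsProbabilityMeasure μ]
    (W : (n : ℕ) → D → Fin n → Ω → ℝ)
    (hindep : ∀ n z, iIndepFun (W n z) μ)
    (hL2 : ∀ n z i, MemLp (W n z i) 2 μ)
    (Dn Vn : ℕ → D → ℝ)
    (hDn : ∀ n z, Dn n z = (1 / n : ℝ) * ∑ i, ∫ ω, W n z i ω ∂μ)
    (hVn : ∀ n z, Vn n z = (1 / n : ℝ) * ∑ i, variance (W n z i) μ)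
    (zstar : D) (Dstar : ℕ → ℝ)
    (l1 l2 l3 F1 F2 : ℝ)
    (hl1 : 0 < l1)
    (hF1 : 0 < F1) (hF2 : 0 < F2)
    (hmean : ∀ n z, Dstar n - Dn n z
      ≥ l1 * dist z zstar ^ 2 - (l2 / Real.sqrt n) * dist z zstar - l3 / n)
    (hvar : ∀ n z, Vn n z ≤ F1 * dist z zstar + F2 / Real.sqrt n)
    (b : ℝ) (hb6 : b ≤ 1 / 6) (A : ℝ) (hA : 0 < A) :
    ∃ K : ℝ, 0 ≤ K ∧ ∃ N : ℕ, ∀ n : ℕ, N ≤ n →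
      ∀ Δ : ℝ, A / (n : ℝ) ^ ((1 : ℝ) / 2 + b) < Δ →
        ∀ z : D,
          (μ {ω | (∑ i, W n z i ω) ≤ n * (Dstar n + Δ)}).toReal
            ≥ 1 - (K / A ^ ((3 : ℝ) / 2)) * (1 / (n : ℝ) ^ ((1 : ℝ) / 4 - 3 * b / 2)) := by
  obtain ⟨N, hN⟩ := eventually_atTop.1 <| (eventually_gt_atTop 0).and <|
    eventually_le_mul_natCast_rpow (b := b) (by linarith) hA (max A (l2 ^ 2 / l1 + 2 * l3))
  refine ⟨4 * (F1 * (1 + 1 / l1) + F2 / √A), by positivity, N, fun n hNn Δ hΔ z => ?_⟩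
  obtain ⟨hn0, hlarge⟩ := hN n hNn
  have hn : (0 : ℝ) < n := Nat.cast_pos.2 hn0
  obtain ⟨hAΔ, hBΔ⟩ := max_le_iff.1 <| hlarge.trans (mul_rpow_lt_mul_of_div_rpow_lt hn hΔ).le
  set S := ∑ i, W n z i
  have hS : MemLp S 2 μ := memLp_finsetSum' _ fun i _ => hL2 n z i
  have hmeanS : μ[S] = n * Dn n z := by
    simp only [S, Finset.sum_apply]
    rw [integral_finsetSum _ fun i _ => (hL2 n z i).integrable one_le_two, hDn n z]
    field_simp
  have hvarS : variance S μ = n * Vn n z := by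
    rw [IndepFun.variance_sum (fun i _ => hL2 n z i)
      (fun i _ j _ hij => (hindep n z).indepFun hij), hVn n z]
    field_simp
  have hgap : (n * Δ + n * l1 * dist z zstar ^ 2) / 2 ≤ n * (Dstar n + Δ) - μ[S] := by
    rw [hmeanS, show n * (Dstar n + Δ) - n * Dn n z = n * Δ + n * (Dstar n - Dn n z) by ring]
    exact half_add_le_of_quadratic_gap hl1 hn (hmean n z) hBΔ
  have hthreshold : μ[S] < n * (Dstar n + Δ) := by
    have : 0 ≤ n * l1 * dist z zstar ^ 2 := by positivity
    linarith
  calc (μ {ω | (∑ i, W n z i ω) ≤ n * (Dstar n + Δ)}).toReal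
      ≥ 1 - variance S μ / (n * (Dstar n + Δ) - μ[S]) ^ 2 := by
        simpa only [S, Finset.sum_apply, measureReal_def] using
          one_sub_variance_div_sq_le_measureReal_le hS hthreshold
    _ ≥ _ := by
        rw [hvarS]
        gcongr 1 - ?_
        exact mul_div_sq_le_rate hn hA hl1 hF1.le hF2.le dist_nonneg hΔ hAΔ (hvar n z) hgap

/-- Theorem 3.4 (degenerate-variance case `V_n⋆ = 0`): let `W_i(z)`, `i = 1,…,n`, be independent
random variables parameterized by `z` in a metric space `D`, with mean dominance
`D_n⋆ − D_n(z) ≥ ℓ₁ d²(z,z⋆) − (ℓ₂/√n) d(z,z⋆) − ℓ₃/n`, variance bound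
`V_n(z) ≤ F₁ d(z,z⋆) + F₂/√n` and third moments `T_n(z) ≤ T_max`. Then for any `0 ≤ b ≤ 1/6`
and `A > 0` there is `K ≥ 0` such that for all sufficiently large `n`, all
`Δ > A/n^{1/2+b}` and all `z`,
`P[∑ᵢ W_i(z) ≤ n(D_n⋆ + Δ)] ≥ 1 − (K/A^{3/2}) n^{−(1/4 − 3b/2)}`. -/
theorem stmt_19 {D : Type*} [MetricSpace D] [Nonempty D]
    {Ω : Type*} [MeasurableSpace Ω] (μ : Measure Ω) [IsProbabilityMeasure μ]
    (W : (n : ℕ) → D → Fin n → Ω → ℝ)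
    (hmeas : ∀ n z i, Measurable (W n z i))
    (hindep : ∀ n z, iIndepFun (W n z) μ)
    (hL2 : ∀ n z i, MemLp (W n z i) 2 μ)
    (hmom3 : ∀ n z i, Integrable (fun ω => |W n z i ω - ∫ ω', W n z i ω' ∂μ| ^ 3) μ)
    (Dn Vn Tn : ℕ → D → ℝ)
    (hDn : ∀ n z, Dn n z = (1 / n : ℝ) * ∑ i, ∫ ω, W n z i ω ∂μ)
    (hVn : ∀ n z, Vn n z = (1 / n : ℝ) * ∑ i, variance (W n z i) μ)
    (hTn : ∀ n z, Tn n z = (1 / n : ℝ) * ∑ i, ∫ ω, |W n z i ω - ∫ ω', W n z i ω' ∂μ| ^ 3 ∂μ)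
    (zstar : D) (Dstar : ℕ → ℝ)
    (l1 l2 l3 F1 F2 Tmax : ℝ)
    (hl1 : 0 < l1) (hl2 : 0 < l2) (hl3 : 0 < l3)
    (hF1 : 0 < F1) (hF2 : 0 < F2) (hTmax : 0 < Tmax)
    (hmean : ∀ n z, Dstar n - Dn n z
      ≥ l1 * dist z zstar ^ 2 - (l2 / Real.sqrt n) * dist z zstar - l3 / n)
    (hvar : ∀ n z, Vn n z ≤ F1 * dist z zstar + F2 / Real.sqrt n)
    (hthird : ∀ n z, Tn n z ≤ Tmax)
    (b : ℝ) (hb0 : 0 ≤ b) (hb6 : b ≤ 1 / 6) (A : ℝ) (hA : 0 < A) :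
    ∃ K : ℝ, 0 ≤ K ∧ ∃ N : ℕ, ∀ n : ℕ, N ≤ n →
      ∀ Δ : ℝ, A / (n : ℝ) ^ ((1 : ℝ) / 2 + b) < Δ →
        ∀ z : D,
          (μ {ω | (∑ i, W n z i ω) ≤ n * (Dstar n + Δ)}).toReal
            ≥ 1 - (K / A ^ ((3 : ℝ) / 2)) * (1 / (n : ℝ) ^ ((1 : ℝ) / 4 - 3 * b / 2)) :=
  stmt_19_general μ W hindep hL2 Dn Vn hDn hVn zstar Dstar l1 l2 l3 F1 F2 hl1 hF1 hF2 hmean hvar b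
    hb6 A hA
end
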